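/- arXiv:2207.11154 — 2 statements merged into one kernel-verified Lean document; each statement's English description precedes it below -/
import Mathlib

section
/- If S and S̃ are positive definite n×n matrices with α⁻¹·S ⪯ S̃ ⪯ α·S for some α ≥ 1, then for any matrix 𝖠 ∈ ℝ^{m×n²}, the matrices H = 𝖠(S⁻¹ ⊗ S⁻¹)𝖠ᵀ and H̃ = 𝖠(S̃⁻¹ ⊗ S̃⁻¹)𝖠ᵀ satisfy α⁻²·H ⪯ H̃ ⪯ α²·H. -/
open Matrix
open scoped Kronecker

/-- Euclidean (ℓ₂) norm of a finitely-indexed real vector. -/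
noncomputable def vecNorm {k : Type*} [Fintype k] (v : k → ℝ) : ℝ :=
  Real.sqrt (∑ i, v i ^ 2)

/-- Frobenius norm of a real matrix. -/
noncomputable def frobNorm {a b : Type*} [Fintype a] [Fintype b] (M : Matrix a b ℝ) : ℝ :=
  Real.sqrt (∑ i, ∑ j, M i j ^ 2)

/-- Spectral (ℓ₂ operator) norm of a real matrix: supremum of ‖Mx‖₂ over unit vectors x. -/
noncomputable def specNorm {a b : Type*} [Fintype a] [Fintype b] (M : Matrix a b ℝ) : ℝ :=
  sSup ((fun x => vecNorm (M.mulVec x)) '' {x | vecNorm x = 1})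

/-- Column-stacking vectorization: `mvec M (j, i) = M i j`. -/
def mvec {a b : Type*} (M : Matrix a b ℝ) : b × a → ℝ := fun p => M p.2 p.1

section Aux

variable {n : Type*} [Fintype n] [DecidableEq n]

omit [DecidableEq n] in
lemma myPosDef_smul {S : Matrix n n ℝ} (hS : S.PosDef) {c : ℝ} (hc : 0 < c) :
    (c • S).PosDef := by
  refine PosDef.of_dotProduct_mulVec_pos ?_ fun x hx => ?_
  · show (c • S)ᴴ = c • S
    rw [conjTranspose_smul, star_trivial, hS.1.eq]
  have := hS.dotProduct_mulVec_pos hx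
  simp only [smul_mulVec, dotProduct_smul]
  positivity

lemma my_inv_antitone {A B : Matrix n n ℝ} (hA : A.PosDef) (hB : B.PosDef)
    (h : (B - A).PosSemidef) : (A⁻¹ - B⁻¹).PosSemidef := by
  have hA1 : A * A⁻¹ = 1 := mul_nonsing_inv A hA.det_pos.ne'.isUnit
  have hA2 : A⁻¹ * A = 1 := nonsing_inv_mul A hA.det_pos.ne'.isUnit
  have hB1 : B * B⁻¹ = 1 := mul_nonsing_inv B hB.det_pos.ne'.isUnit
  have hB2 : B⁻¹ * B = 1 := nonsing_inv_mul B hB.det_pos.ne'.isUnit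
  have key : A⁻¹ - B⁻¹ = (B⁻¹ - A⁻¹) * A * (B⁻¹ - A⁻¹) + B⁻¹ * (B - A) * B⁻¹ := by
    simp only [sub_mul, mul_sub, Matrix.mul_assoc, hA2, hB2, Matrix.mul_one]
    simp only [← Matrix.mul_assoc, hA1, hB1, Matrix.one_mul, Matrix.mul_one]
    abel
  rw [key]
  have hC : (B⁻¹ - A⁻¹).IsHermitian :=
    (hB.posSemidef.isHermitian.inv.sub hA.posSemidef.isHermitian.inv)
  have t1 := hA.posSemidef.mul_mul_conjTranspose_same (B⁻¹ - A⁻¹)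
  rw [hC.eq] at t1
  have t2 := h.mul_mul_conjTranspose_same B⁻¹
  rw [hB.posSemidef.isHermitian.inv.eq] at t2
  exact t1.add t2

omit [DecidableEq n] in
lemma my_kron_psd {A B : Matrix n n ℝ} (hA : A.PosSemidef) (hB : B.PosSemidef) :
    (A ⊗ₖ B).PosSemidef := by
  exact hA.kronecker hB

omit [DecidableEq n] in
lemma my_kron_mono {X Y : Matrix n n ℝ} (hX : X.PosSemidef) (hY : Y.PosSemidef)
    (h : (Y - X).PosSemidef) : (Y ⊗ₖ Y - X ⊗ₖ X).PosSemidef := by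
  have key : Y ⊗ₖ Y - X ⊗ₖ X = Y ⊗ₖ (Y - X) + (Y - X) ⊗ₖ X := by
    ext ⟨i, j⟩ ⟨k, l⟩
    simp [Matrix.kroneckerMap_apply, Matrix.sub_apply, Matrix.add_apply]
    ring
  rw [key]
  exact (my_kron_psd hY h).add (my_kron_psd h hX)

omit [DecidableEq n] in
lemma my_conj_psd {m : Type*} [Fintype m] {M : Matrix n n ℝ} (hM : M.PosSemidef)
    (A : Matrix m n ℝ) : (A * M * Aᵀ).PosSemidef := by
  have := hM.mul_mul_conjTranspose_same A
  rwa [conjTranspose_eq_transpose_of_trivial] at this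

end Aux

/-- PSD approximation of the slack matrix gives a PSD approximation of the Hessian
`H = 𝖠 (S⁻¹ ⊗ S⁻¹) 𝖠ᵀ` (Fact 7.10 in HJSTZ22). -/
theorem stmt0 {n m : ℕ} (α : ℝ) (hα : 1 ≤ α)
    (S St : Matrix (Fin n) (Fin n) ℝ) (hS : S.PosDef) (hSt : St.PosDef)
    (h1 : (St - α⁻¹ • S).PosSemidef) (h2 : (α • S - St).PosSemidef)
    (A : Matrix (Fin m) (Fin n × Fin n) ℝ) :
    ((A * (St⁻¹ ⊗ₖ St⁻¹) * Aᵀ) - (α ^ 2)⁻¹ • (A * (S⁻¹ ⊗ₖ S⁻¹) * Aᵀ)).PosSemidef ∧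
    ((α ^ 2) • (A * (S⁻¹ ⊗ₖ S⁻¹) * Aᵀ) - (A * (St⁻¹ ⊗ₖ St⁻¹) * Aᵀ)).PosSemidef := by
  have hα0 : (0 : ℝ) < α := lt_of_lt_of_le one_pos hα
  have hSinv : S⁻¹.PosDef := hS.inv
  have hStinv : St⁻¹.PosDef := hSt.inv
  -- inverses of scaled matrices
  have e1 : (α⁻¹ • S)⁻¹ = α • S⁻¹ := by
    apply Matrix.inv_eq_left_inv
    rw [Matrix.smul_mul, Matrix.mul_smul, smul_smul, mul_inv_cancel₀ hα0.ne', one_smul,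
      nonsing_inv_mul S hS.det_pos.ne'.isUnit]
  have e2 : (α • S)⁻¹ = α⁻¹ • S⁻¹ := by
    apply Matrix.inv_eq_left_inv
    rw [Matrix.smul_mul, Matrix.mul_smul, smul_smul, inv_mul_cancel₀ hα0.ne', one_smul,
      nonsing_inv_mul S hS.det_pos.ne'.isUnit]
  -- Loewner bounds on St⁻¹
  have u1 : (α • S⁻¹ - St⁻¹).PosSemidef := by
    have := my_inv_antitone (myPosDef_smul hS (by positivity)) hSt h1
    rwa [e1] at this
  have u2 : (St⁻¹ - α⁻¹ • S⁻¹).PosSemidef := by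
    have := my_inv_antitone hSt (myPosDef_smul hS hα0) h2
    rwa [e2] at this
  -- PSD of scaled inverses
  have p1 : (α⁻¹ • S⁻¹).PosSemidef := (myPosDef_smul hSinv (by positivity)).posSemidef
  have p2 : (α • S⁻¹).PosSemidef := (myPosDef_smul hSinv hα0).posSemidef
  -- Kronecker bounds
  have sm1 : (α⁻¹ • S⁻¹) ⊗ₖ (α⁻¹ • S⁻¹) = (α ^ 2)⁻¹ • (S⁻¹ ⊗ₖ S⁻¹) := by
    rw [Matrix.smul_kronecker, Matrix.kronecker_smul, smul_smul, ← mul_inv, ← sq]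
  have sm2 : (α • S⁻¹) ⊗ₖ (α • S⁻¹) = (α ^ 2) • (S⁻¹ ⊗ₖ S⁻¹) := by
    rw [Matrix.smul_kronecker, Matrix.kronecker_smul, smul_smul, ← sq]
  have k1 : (St⁻¹ ⊗ₖ St⁻¹ - (α ^ 2)⁻¹ • (S⁻¹ ⊗ₖ S⁻¹)).PosSemidef := by
    have := my_kron_mono p1 hStinv.posSemidef u2
    rwa [sm1] at this
  have k2 : ((α ^ 2) • (S⁻¹ ⊗ₖ S⁻¹) - St⁻¹ ⊗ₖ St⁻¹).PosSemidef := by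
    have := my_kron_mono hStinv.posSemidef p2 u1
    rwa [sm2] at this
  constructor
  · have := my_conj_psd k1 A
    rwa [Matrix.mul_sub, Matrix.sub_mul, Matrix.mul_smul, Matrix.smul_mul] at this
  · have := my_conj_psd k2 A
    rwa [Matrix.mul_sub, Matrix.sub_mul, Matrix.mul_smul, Matrix.smul_mul] at this
end

section
/- Let H̃ ∈ ℝ^{m×m} be symmetric positive definite, g̃ ∈ ℝ^m, and suppose N_δ ∈ (1±ε'_δ)·‖H̃⁻¹|g̃⟩‖₂, N_g = ‖g̃‖₂, a unit vector u with ‖u − |H̃⁻¹g̃⟩‖₂ ≤ ε_δ, and a vector w with ‖u − w‖₂ ≤ ε_n and ‖w‖₂ ≤ 2. Then δ̃ := N_δ·N_g·w satisfies ‖H̃⁻¹g̃ − δ̃‖₂ ≤ C·(ε_δ + ε_n + ε'_δ)·‖H̃⁻¹g̃‖₂ for an absolute constant C. -/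
open Matrix
open scoped Kronecker

lemma vecNorm_eq_norm {m : ℕ} (v : EuclideanSpace ℝ (Fin m)) :
    vecNorm (v : Fin m → ℝ) = ‖v‖ := by
  rw [EuclideanSpace.norm_eq, vecNorm]
  congr 1
  exact Finset.sum_congr rfl fun i _ => by rw [Real.norm_eq_abs, sq_abs]

lemma vecNorm_nonneg {m : ℕ} (v : Fin m → ℝ) : 0 ≤ vecNorm v :=
  Real.sqrt_nonneg _

lemma vecNorm_smul {m : ℕ} (c : ℝ) (v : Fin m → ℝ) :
    vecNorm (c • v) = |c| * vecNorm v := by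
  have := vecNorm_eq_norm (c • (WithLp.toLp 2 v : EuclideanSpace ℝ (Fin m)))
  rw [norm_smul, Real.norm_eq_abs] at this
  rw [show (c • v : Fin m → ℝ) = WithLp.ofLp (c • (WithLp.toLp 2 v : EuclideanSpace ℝ (Fin m))) from rfl,
    this, ← vecNorm_eq_norm]

lemma vecNorm_pos {m : ℕ} {v : Fin m → ℝ} (hv : v ≠ 0) : 0 < vecNorm v := by
  rw [show v = WithLp.ofLp (WithLp.toLp 2 v : EuclideanSpace ℝ (Fin m)) from rfl, vecNorm_eq_norm]
  exact norm_pos_iff.mpr (by intro h; apply hv; simpa using congrArg WithLp.ofLp h)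

/-- Error bound for the reconstructed Newton step δ̃ = N_δ·N_g·w:
‖H̃⁻¹g̃ − δ̃‖₂ ≤ C·(ε_δ + ε_n + ε'_δ)·‖H̃⁻¹g̃‖₂ for an absolute constant C. -/
theorem stmt15 :
    ∃ C : ℝ, 0 < C ∧
      ∀ (m : ℕ) (Ht : Matrix (Fin m) (Fin m) ℝ), Ht.PosDef →
      ∀ (gt u w : Fin m → ℝ) (Nδ εδ εn εδ' : ℝ),
        gt ≠ 0 →
        0 ≤ εδ → εδ ≤ 1 / 2 → 0 ≤ εn → εn ≤ 1 / 2 → 0 ≤ εδ' → εδ' ≤ 1 / 2 →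
        |Nδ - vecNorm ((Ht⁻¹).mulVec ((vecNorm gt)⁻¹ • gt))| ≤
          εδ' * vecNorm ((Ht⁻¹).mulVec ((vecNorm gt)⁻¹ • gt)) →
        vecNorm u = 1 →
        vecNorm (u - (vecNorm ((Ht⁻¹).mulVec gt))⁻¹ • ((Ht⁻¹).mulVec gt)) ≤ εδ →
        vecNorm (u - w) ≤ εn →
        vecNorm w ≤ 2 →
        vecNorm ((Ht⁻¹).mulVec gt - (Nδ * vecNorm gt) • w) ≤
          C * (εδ + εn + εδ') * vecNorm ((Ht⁻¹).mulVec gt) := by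
  refine ⟨2, by norm_num, ?_⟩
  intro m Ht hH gt u w Nδ εδ εn εδ' hg hεδ _ hεn _ hεδ' _ h1 hu hδ hn hw
  set x : Fin m → ℝ := (Ht⁻¹).mulVec gt with hx
  have hNg : 0 < vecNorm gt := vecNorm_pos hg
  set Ng := vecNorm gt with hNgdef
  -- x ≠ 0
  have hxne : x ≠ 0 := by
    intro h0
    apply hg
    have : Ht.mulVec x = gt := by
      rw [hx, Matrix.mulVec_mulVec, Matrix.mul_nonsing_inv _ hH.det_pos.ne'.isUnit]
      · simp
    · rw [h0] at this
      simpa using this.symm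
  have hN : 0 < vecNorm x := vecNorm_pos hxne
  set N := vecNorm x with hNdef
  -- rewrite h1
  have hsm : (Ht⁻¹).mulVec (Ng⁻¹ • gt) = Ng⁻¹ • x := by
    rw [hx, Matrix.mulVec_smul]
  rw [hsm, vecNorm_smul, abs_of_nonneg (inv_nonneg.mpr hNg.le), ← hNdef] at h1
  -- key bound on |N - Nδ * Ng|
  have hbound : |N - Nδ * Ng| ≤ εδ' * N := by
    have e1 : Ng * (Nδ - Ng⁻¹ * N) = Nδ * Ng - N := by
      field_simp
    have e2 : Ng * (εδ' * (Ng⁻¹ * N)) = εδ' * N := by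
      field_simp
    rw [abs_sub_comm, ← e1, ← e2, abs_mul, abs_of_pos hNg]
    exact mul_le_mul_of_nonneg_left h1 hNg.le
  -- work in EuclideanSpace
  set X : EuclideanSpace ℝ (Fin m) := WithLp.toLp 2 x with hX
  set U : EuclideanSpace ℝ (Fin m) := WithLp.toLp 2 u with hU
  set W : EuclideanSpace ℝ (Fin m) := WithLp.toLp 2 w with hW
  have key : X - (Nδ * Ng) • W
      = N • (N⁻¹ • X - U) + N • (U - W) + (N - Nδ * Ng) • W := by
    have h2 : N • N⁻¹ • X = X := by
      rw [smul_smul, mul_inv_cancel₀ hN.ne', one_smul]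
    rw [smul_sub, smul_sub, h2, sub_smul]
    abel
  have goal_eq : vecNorm (x - (Nδ * Ng) • w) = ‖X - (Nδ * Ng) • W‖ :=
    vecNorm_eq_norm _
  rw [show ((Ht⁻¹).mulVec gt - (Nδ * vecNorm gt) • w) = (x - (Nδ * Ng) • w) from rfl,
    goal_eq, key]
  have t1 : ‖N • (N⁻¹ • X - U)‖ ≤ N * εδ := by
    rw [norm_smul, Real.norm_eq_abs, abs_of_pos hN, norm_sub_rev]
    have : ‖U - N⁻¹ • X‖ ≤ εδ := by
      rw [← vecNorm_eq_norm]
      exact hδ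
    exact mul_le_mul_of_nonneg_left this hN.le
  have t2 : ‖N • (U - W)‖ ≤ N * εn := by
    rw [norm_smul, Real.norm_eq_abs, abs_of_pos hN]
    have : ‖U - W‖ ≤ εn := by rw [← vecNorm_eq_norm]; exact hn
    exact mul_le_mul_of_nonneg_left this hN.le
  have t3 : ‖(N - Nδ * Ng) • W‖ ≤ εδ' * N * 2 := by
    rw [norm_smul, Real.norm_eq_abs]
    have hWn : ‖W‖ ≤ 2 := by rw [← vecNorm_eq_norm]; exact hw
    calc |N - Nδ * Ng| * ‖W‖ ≤ (εδ' * N) * 2 :=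
          mul_le_mul hbound hWn (norm_nonneg _) (by positivity)
      _ = εδ' * N * 2 := rfl
  calc ‖N • (N⁻¹ • X - U) + N • (U - W) + (N - Nδ * Ng) • W‖
      ≤ ‖N • (N⁻¹ • X - U) + N • (U - W)‖ + ‖(N - Nδ * Ng) • W‖ := norm_add_le _ _
    _ ≤ ‖N • (N⁻¹ • X - U)‖ + ‖N • (U - W)‖ + ‖(N - Nδ * Ng) • W‖ := by
        gcongr; exact norm_add_le _ _
    _ ≤ N * εδ + N * εn + εδ' * N * 2 := by gcongr
    _ ≤ 2 * (εδ + εn + εδ') * N := by nlinarith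
end
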